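/- On a Riemannian surface (m = 2) with Ric = (R/2)g, suppose Ric ≥ ε ∇φ⊗∇φ with ε ≥ 2α(k-1)/(k-2) and k > 2, where α > 0. Then the tensor T = Ric - α∇φ⊗∇φ - (1/k)(R - α|∇φ|²)g is positive semidefinite. -/
import Mathlib


/-- On a Riemannian surface (`Ric = (R/2) g`), if `Ric ≥ ε ∇φ⊗∇φ` with
`ε ≥ 2α(k-1)/(k-2)`, `k > 2`, `α > 0`, then the tensor
`T = Ric - α ∇φ⊗∇φ - (1/k)(R - α|∇φ|²) g` is positive semidefinite.  The tangent
plane is modelled as `EuclideanSpace ℝ (Fin 2)`, the differential of `φ` at the point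
as a linear map `dφ` into an inner product space `W`, so that
`(∇φ⊗∇φ)(X,X) = ‖dφ X‖²` and `|∇φ|² = Σᵢ ‖dφ eᵢ‖²` over an orthonormal basis. -/
theorem stmt_10 (W : Type*) [NormedAddCommGroup W] [InnerProductSpace ℝ W]
    (dφ : EuclideanSpace ℝ (Fin 2) →ₗ[ℝ] W) (R α k ε : ℝ)
    (hα : 0 < α) (hk : 2 < k) (hε : ε ≥ 2 * α * (k - 1) / (k - 2))
    (hRic : ∀ X : EuclideanSpace ℝ (Fin 2), ε * ‖dφ X‖ ^ 2 ≤ (R / 2) * ‖X‖ ^ 2) :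
    ∀ X : EuclideanSpace ℝ (Fin 2),
      0 ≤ (R / 2) * ‖X‖ ^ 2 - α * ‖dφ X‖ ^ 2
        - (1 / k) * (R - α * ∑ i, ‖dφ (EuclideanSpace.single i 1)‖ ^ 2) * ‖X‖ ^ 2 := by
  intro X
  have hk2 : (0:ℝ) < k - 2 := by linarith
  have hk0 : (0:ℝ) < k := by linarith
  have hε' : 2 * α * (k - 1) ≤ ε * (k - 2) := (div_le_iff₀ hk2).mp hε
  have hεpos : 0 < ε := by nlinarith
  -- R ≥ 0
  have hR : 0 ≤ R := by
    have h0 := hRic (EuclideanSpace.single 0 1)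
    have hn : ‖(EuclideanSpace.single 0 1 : EuclideanSpace ℝ (Fin 2))‖ = 1 := by
      simp [EuclideanSpace.norm_single]
    rw [hn] at h0
    nlinarith [sq_nonneg ‖dφ (EuclideanSpace.single 0 1)‖]
  set S := ∑ i, ‖dφ (EuclideanSpace.single i 1)‖ ^ 2 with hS
  have hSnn : 0 ≤ S := Finset.sum_nonneg fun i _ => sq_nonneg _
  have hX := hRic X
  have hb : 0 ≤ ‖X‖ ^ 2 := sq_nonneg _
  have ha : 0 ≤ ‖dφ X‖ ^ 2 := sq_nonneg _
  set a := ‖dφ X‖ ^ 2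
  set b := ‖X‖ ^ 2
  -- show k * ε * goal ≥ 0, then divide by the positive factor k * ε
  have key : 0 ≤ ((R / 2) * b - α * a - (1 / k) * (R - α * S) * b) * (k * ε) := by
    have expand : ((R / 2) * b - α * a - (1 / k) * (R - α * S) * b) * (k * ε)
        = (R / 2) * b * k * ε - α * a * k * ε - ε * (R - α * S) * b := by
      field_simp
    rw [expand]
    have h2 : α * k * (ε * a) ≤ α * k * ((R / 2) * b) :=
      mul_le_mul_of_nonneg_left hX (by positivity)
    nlinarith [mul_nonneg hR hb, mul_nonneg (mul_nonneg hεpos.le (mul_nonneg hα.le hSnn)) hb,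
      mul_nonneg (mul_nonneg hR hb) (by nlinarith : (0:ℝ) ≤ ε * (k - 2) - α * k)]
  nlinarith [mul_pos hk0 hεpos, key]
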